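/- Any θ̄ > 0 that is a local minimizer of the map θ ↦ KL(g* ‖ g_θ) is a fixed point of the population EM operator: E_{X∼g*}[X tanh(θ̄ X)] = θ̄. -/

import Mathlib

open MeasureTheory

noncomputable section

/-- Standard normal density `φ`. -/
def stdPdf (x : ℝ) : ℝ := (Real.sqrt (2 * Real.pi))⁻¹ * Real.exp (-x ^ 2 / 2)

/-- True density: three-component Gaussian mixture with unit variances,
`g*(x) = (1/4)φ(x − θ*(−ρ−1)) + (1/2)φ(x − θ*) + (1/4)φ(x − θ*(ρ−1))`. -/
def gstar (θs ρ x : ℝ) : ℝ :=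
  (1 / 4) * stdPdf (x - θs * (-ρ - 1)) + (1 / 2) * stdPdf (x - θs)
    + (1 / 4) * stdPdf (x - θs * (ρ - 1))

/-- Fitted two-component symmetric model `g_θ(x) = (1/2)φ(x−θ) + (1/2)φ(x+θ)`. -/
def gmod (θ x : ℝ) : ℝ := (1 / 2) * stdPdf (x - θ) + (1 / 2) * stdPdf (x + θ)

/-- The probability measure on `ℝ` with Lebesgue density `g*`. -/
def gstarMeasure (θs ρ : ℝ) : Measure ℝ :=
  volume.withDensity fun x => ENNReal.ofReal (gstar θs ρ x)

/-- Kullback–Leibler divergence `KL(g* ‖ g_θ)` between the measures with Lebesgue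
densities `g*` and `g_θ`. -/
def klg (θs ρ θ : ℝ) : ℝ := ∫ x, gstar θs ρ x * Real.log (gstar θs ρ x / gmod θ x)

/-- Population EM operator `M(θ) = E_{X ∼ g*}[X tanh(θ X)]`. -/
def Mpop (θs ρ θ : ℝ) : ℝ := ∫ x, x * Real.tanh (θ * x) ∂(gstarMeasure θs ρ)

/-!
Since `g_θ(x) = φ(x) e^{-θ²/2} cosh(θx)`, the score `∂_θ log g_θ(x) = x tanh(θx) − θ` grows at
most linearly in `x`, so the Gaussian tails of `g*` allow differentiating `KL(g* ‖ g_θ)` under the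
integral sign: `d/dθ KL(g* ‖ g_θ) = θ − M(θ)`, which vanishes at a local minimizer. The integrand
of `KL` itself is integrable because `g*` and `g_θ` both lie between `φ(x − μ)/2` and `1` for a
suitable `μ`, so their logarithms grow only quadratically.
-/

open Real ProbabilityTheory

lemma one_le_sqrt_two_mul_pi : 1 ≤ √(2 * π) :=
  one_le_sqrt.mpr (by linarith [pi_gt_three])

lemma stdPdf_sub_eq_gaussianPDFReal (μ x : ℝ) : stdPdf (x - μ) = gaussianPDFReal μ 1 x := by
  simp [stdPdf, gaussianPDFReal]

lemma stdPdf_pos (x : ℝ) : 0 < stdPdf x := by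
  unfold stdPdf; positivity

lemma stdPdf_le_one (x : ℝ) : stdPdf x ≤ 1 :=
  mul_le_one₀ (inv_le_one_of_one_le₀ one_le_sqrt_two_mul_pi) (exp_pos _).le
    (exp_le_one_iff.mpr (by nlinarith [sq_nonneg x]))

lemma log_stdPdf (x : ℝ) : log (stdPdf x) = -log √(2 * π) - x ^ 2 / 2 := by
  rw [stdPdf, log_mul (by positivity) (exp_ne_zero _), log_inv, log_exp]
  ring

@[fun_prop]
lemma continuous_stdPdf : Continuous stdPdf := by
  unfold stdPdf; fun_prop

@[fun_prop]
lemma integrable_stdPdf_sub (μ : ℝ) : Integrable fun x => stdPdf (x - μ) := by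
  simpa only [stdPdf_sub_eq_gaussianPDFReal] using integrable_gaussianPDFReal μ 1

lemma integral_stdPdf_sub (μ : ℝ) : ∫ x, stdPdf (x - μ) = 1 := by
  simpa only [stdPdf_sub_eq_gaussianPDFReal] using integral_gaussianPDFReal_eq_one μ one_ne_zero

lemma integrable_pow_mul_stdPdf (n : ℕ) : Integrable fun x => x ^ n * stdPdf x := by
  have h := (integrable_rpow_mul_exp_neg_mul_sq (b := 1 / 2) (by norm_num)
    (s := n) (by linarith [n.cast_nonneg (α := ℝ)])).const_mul (√(2 * π))⁻¹
  refine h.congr (Filter.Eventually.of_forall fun x => ?_)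
  simp only [stdPdf, rpow_natCast]
  ring_nf

@[fun_prop]
lemma integrable_sq_mul_stdPdf_sub (μ : ℝ) : Integrable fun x => x ^ 2 * stdPdf (x - μ) := by
  have h := (((integrable_pow_mul_stdPdf 2).add
    ((integrable_pow_mul_stdPdf 1).const_mul (2 * μ))).add
    ((integrable_pow_mul_stdPdf 0).const_mul (μ ^ 2))).comp_sub_right μ
  refine h.congr (Filter.Eventually.of_forall fun x => ?_)
  simp only [Pi.add_apply]
  ring

lemma abs_log_le_of_half_stdPdf_le {g x μ : ℝ} (hlo : stdPdf (x - μ) / 2 ≤ g) (hhi : g ≤ 1) :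
    |log g| ≤ log (2 * √(2 * π)) + (x - μ) ^ 2 / 2 := by
  have hpos : 0 < stdPdf (x - μ) / 2 := half_pos (stdPdf_pos _)
  have hlog_lo := log_le_log hpos hlo
  rw [log_div (stdPdf_pos _).ne' two_ne_zero, log_stdPdf] at hlog_lo
  rw [log_mul two_ne_zero (by positivity), abs_le]
  constructor
  · linarith
  · linarith [log_nonpos (hpos.trans_le hlo).le hhi, log_nonneg one_le_two,
      log_nonneg one_le_sqrt_two_mul_pi, sq_nonneg (x - μ)]

lemma gmod_eq (θ x : ℝ) : gmod θ x = (√(2 * π))⁻¹ * exp (-(x ^ 2 + θ ^ 2) / 2) * cosh (θ * x) := by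
  have h : ∀ s : ℝ, exp (-(x ^ 2 + θ ^ 2) / 2) * exp s = exp (-(x ^ 2 + θ ^ 2) / 2 + s) :=
    fun s => (exp_add _ _).symm
  rw [gmod, stdPdf, stdPdf, cosh_eq, mul_div_assoc', mul_add, mul_assoc, mul_assoc, h, h]
  ring_nf

lemma gmod_pos (θ x : ℝ) : 0 < gmod θ x := by
  unfold gmod; linarith [stdPdf_pos (x - θ), stdPdf_pos (x + θ)]

lemma gmod_le_one (θ x : ℝ) : gmod θ x ≤ 1 := by
  unfold gmod; linarith [stdPdf_le_one (x - θ), stdPdf_le_one (x + θ)]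

lemma half_stdPdf_le_gmod (θ x : ℝ) : stdPdf (x - θ) / 2 ≤ gmod θ x := by
  unfold gmod; linarith [stdPdf_pos (x + θ)]

@[fun_prop]
lemma continuous_gmod (θ : ℝ) : Continuous (gmod θ) := by
  unfold gmod; fun_prop

lemma log_gmod (θ x : ℝ) :
    log (gmod θ x) = log (cosh (θ * x)) - (x ^ 2 + θ ^ 2) / 2 - log √(2 * π) := by
  rw [gmod_eq, log_mul (by positivity) (cosh_pos _).ne', log_mul (by positivity) (exp_ne_zero _),
    log_inv, log_exp]
  ring

lemma hasDerivAt_log_gmod (x θ : ℝ) :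
    HasDerivAt (fun θ => log (gmod θ x)) (x * tanh (θ * x) - θ) θ := by
  have hcosh : HasDerivAt (fun θ => log (cosh (θ * x))) (x * tanh (θ * x)) θ := by
    convert (((hasDerivAt_id' θ).mul_const x).cosh).log (cosh_pos _).ne' using 1
    rw [tanh_eq_sinh_div_cosh]
    ring
  have hsq : HasDerivAt (fun θ => (x ^ 2 + θ ^ 2) / 2) θ θ :=
    (((hasDerivAt_pow 2 θ).const_add (x ^ 2)).div_const 2).congr_deriv (by norm_num)
  simp only [log_gmod]
  exact (hcosh.sub hsq).sub_const _

@[fun_prop]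
lemma measurable_tanh : Measurable tanh := by
  rw [show tanh = sinh / cosh from funext tanh_eq_sinh_div_cosh]
  exact measurable_sinh.div measurable_cosh

lemma hasDerivAt_mul_log_div_gmod (c x θ : ℝ) :
    HasDerivAt (fun θ => c * log (c / gmod θ x)) (c * (θ - x * tanh (θ * x))) θ := by
  by_cases hc : c = 0
  · simpa [hc] using hasDerivAt_const θ (0 : ℝ)
  · simp_rw [log_div hc (gmod_pos _ x).ne']
    exact (((hasDerivAt_log_gmod x θ).const_sub _).const_mul c).congr_deriv (by ring)

lemma hasDerivAt_integral_mul_log_div_gmod {g : ℝ → ℝ} (hg : Integrable g)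
    (hxg : Integrable fun x => x * g x) {θ₀ : ℝ}
    (hint : Integrable fun x => g x * log (g x / gmod θ₀ x)) :
    HasDerivAt (fun θ => ∫ x, g x * log (g x / gmod θ x))
      (θ₀ * (∫ x, g x) - ∫ x, g x * (x * tanh (θ₀ * x))) θ₀ := by
  have hg_meas := hg.aemeasurable
  have hmeas : ∀ θ, AEStronglyMeasurable (fun x => g x * log (g x / gmod θ x)) := fun θ =>
    (hg_meas.mul (measurable_log.comp_aemeasurable
      (hg_meas.div (continuous_gmod θ).measurable.aemeasurable))).aestronglyMeasurable
  have hbound : ∀ x, ∀ θ ∈ Metric.ball θ₀ 1,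
      ‖g x * (θ - x * tanh (θ * x))‖ ≤ (|θ₀| + 1) * ‖g x‖ + ‖x * g x‖ := by
    intro x θ hθ
    have hθ' : |θ| ≤ |θ₀| + 1 := by
      have := abs_sub_abs_le_abs_sub θ θ₀
      rw [Metric.mem_ball, dist_eq] at hθ
      linarith
    have htanh : |x * tanh (θ * x)| ≤ |x| := by
      rw [abs_mul]
      exact mul_le_of_le_one_right (abs_nonneg x) ((abs_tanh_lt_one _).le)
    simp only [norm_eq_abs, abs_mul]
    nlinarith [abs_sub θ (x * tanh (θ * x)), abs_nonneg (g x)]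
  obtain ⟨hint', hderiv'⟩ := hasDerivAt_integral_of_dominated_loc_of_deriv_le
    (Metric.ball_mem_nhds θ₀ one_pos) (Filter.Eventually.of_forall hmeas) hint
    (hg_meas.mul (by fun_prop)).aestronglyMeasurable (Filter.Eventually.of_forall hbound)
    ((hg.norm.const_mul _).add hxg.norm)
    (Filter.Eventually.of_forall fun x θ _ => hasDerivAt_mul_log_div_gmod (g x) x θ)
  have htanh : Integrable fun x => g x * (x * tanh (θ₀ * x)) := by
    refine ((hg.mul_const θ₀).sub hint').congr (Filter.Eventually.of_forall fun x => ?_)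
    simp only [Pi.sub_apply]
    ring
  refine hderiv'.congr_deriv ?_
  rw [← integral_const_mul, ← integral_sub (hg.const_mul θ₀) htanh]
  congr 1 with x
  ring

section gstar

variable (θs ρ : ℝ)

lemma half_stdPdf_le_gstar (x : ℝ) : stdPdf (x - θs) / 2 ≤ gstar θs ρ x := by
  unfold gstar; linarith [stdPdf_pos (x - θs * (-ρ - 1)), stdPdf_pos (x - θs * (ρ - 1))]

lemma gstar_le_one (x : ℝ) : gstar θs ρ x ≤ 1 := by
  unfold gstar
  linarith [stdPdf_le_one (x - θs * (-ρ - 1)), stdPdf_le_one (x - θs),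
    stdPdf_le_one (x - θs * (ρ - 1))]

lemma gstar_nonneg (x : ℝ) : 0 ≤ gstar θs ρ x :=
  (half_pos (stdPdf_pos _)).le.trans (half_stdPdf_le_gstar θs ρ x)

@[fun_prop]
lemma continuous_gstar : Continuous (gstar θs ρ) := by
  unfold gstar; fun_prop

lemma integrable_gstar : Integrable (gstar θs ρ) := by
  unfold gstar; fun_prop

lemma integrable_sq_mul_gstar : Integrable fun x => x ^ 2 * gstar θs ρ x := by
  simp only [gstar, mul_add, mul_left_comm (_ ^ 2)]
  fun_prop

lemma integrable_mul_gstar : Integrable fun x => x * gstar θs ρ x := by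
  refine ((integrable_gstar θs ρ).add (integrable_sq_mul_gstar θs ρ)).mono'
    (by fun_prop) (Filter.Eventually.of_forall fun x => ?_)
  have := gstar_nonneg θs ρ x
  rw [norm_mul, norm_eq_abs, norm_of_nonneg this, Pi.add_apply]
  nlinarith [sq_nonneg (|x| - 1), sq_abs x]

lemma integral_gstar : ∫ x, gstar θs ρ x = 1 := by
  unfold gstar
  rw [integral_add, integral_add, integral_const_mul, integral_const_mul, integral_const_mul,
    integral_stdPdf_sub, integral_stdPdf_sub, integral_stdPdf_sub]
  all_goals first | fun_prop | norm_num

end gstar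

section klg

variable (θs ρ : ℝ)

lemma abs_log_gstar_div_gmod_le (θ x : ℝ) :
    |log (gstar θs ρ x / gmod θ x)| ≤
      (2 * log (2 * √(2 * π)) + θs ^ 2 + θ ^ 2 + 2) * (1 + x ^ 2) := by
  have hc : 0 ≤ log (2 * √(2 * π)) :=
    log_nonneg (by nlinarith [one_le_sqrt_two_mul_pi])
  have hstar := abs_log_le_of_half_stdPdf_le (half_stdPdf_le_gstar θs ρ x) (gstar_le_one θs ρ x)
  have hmod := abs_log_le_of_half_stdPdf_le (half_stdPdf_le_gmod θ x) (gmod_le_one θ x)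
  have hpos : 0 < gstar θs ρ x := (half_pos (stdPdf_pos _)).trans_le (half_stdPdf_le_gstar θs ρ x)
  rw [log_div hpos.ne' (gmod_pos θ x).ne']
  nlinarith [abs_sub (log (gstar θs ρ x)) (log (gmod θ x)), sq_nonneg (x + θs), sq_nonneg (x + θ),
    mul_nonneg (add_nonneg (mul_nonneg zero_le_two hc) (add_nonneg (sq_nonneg θs) (sq_nonneg θ)))
      (sq_nonneg x)]

lemma integrable_gstar_mul_log_div_gmod (θ : ℝ) :
    Integrable fun x => gstar θs ρ x * log (gstar θs ρ x / gmod θ x) := by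
  refine (((integrable_gstar θs ρ).add (integrable_sq_mul_gstar θs ρ)).const_mul
    (2 * log (2 * √(2 * π)) + θs ^ 2 + θ ^ 2 + 2)).mono'
    (Measurable.aestronglyMeasurable (by fun_prop))
    (Filter.Eventually.of_forall fun x => ?_)
  simp only [norm_mul, norm_eq_abs, abs_of_nonneg (gstar_nonneg θs ρ x), Pi.add_apply]
  nlinarith [abs_log_gstar_div_gmod_le θs ρ θ x, gstar_nonneg θs ρ x]

lemma Mpop_eq_integral (θ : ℝ) : Mpop θs ρ θ = ∫ x, gstar θs ρ x * (x * tanh (θ * x)) := by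
  rw [Mpop, gstarMeasure, integral_withDensity_eq_integral_toReal_smul (by fun_prop)
    (Filter.Eventually.of_forall fun _ => ENNReal.ofReal_lt_top)]
  simp only [ENNReal.toReal_ofReal (gstar_nonneg θs ρ _), smul_eq_mul]

lemma hasDerivAt_klg (θ : ℝ) : HasDerivAt (klg θs ρ) (θ - Mpop θs ρ θ) θ := by
  have h := hasDerivAt_integral_mul_log_div_gmod (integrable_gstar θs ρ)
    (integrable_mul_gstar θs ρ) (integrable_gstar_mul_log_div_gmod θs ρ θ)
  rwa [integral_gstar, mul_one, ← Mpop_eq_integral] at h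

end klg

theorem local_min_kl_is_em_fixed_point_general (θs : ℝ) (ρ : ℝ)
    (θbar : ℝ) (hmin : IsLocalMin (fun θ => klg θs ρ θ) θbar) :
    Mpop θs ρ θbar = θbar := by
  linarith [hmin.hasDerivAt_eq_zero (hasDerivAt_klg θs ρ θbar)]

/-- Any `θ̄ > 0` that is a local minimizer of `θ ↦ KL(g* ‖ g_θ)` is a fixed point of
the population EM operator: `E_{X∼g*}[X tanh(θ̄ X)] = θ̄`. -/
theorem local_min_kl_is_em_fixed_point (θs : ℝ) (hθs : θs ≠ 0) (ρ : ℝ) (hρ : 0 ≤ ρ)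
    (θbar : ℝ) (hθbar : 0 < θbar) (hmin : IsLocalMin (fun θ => klg θs ρ θ) θbar) :
    Mpop θs ρ θbar = θbar :=
  local_min_kl_is_em_fixed_point_general θs ρ θbar hmin

end
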